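/- arXiv:2501.00981 — 2 statements merged into one kernel-verified Lean document; each statement's English description precedes it below -/
import Mathlib

section
/- Let P₁, P₂ : M → 𝕊ⁿ₊₊ be maps from a finite set M = {1,…,m₀} into the positive definite symmetric n×n matrices, let Λ = (λ_{ιȷ}) be a matrix of reals with λ_{ιȷ} > 0 for ι ≠ ȷ and each row summing to 0, and define Λ[P](ι) = Σ_ȷ λ_{ιȷ} P(ȷ). Suppose A₁, A₂, C₁, C₂ : M → ℝⁿˣⁿ satisfy, for all ι ∈ M: Λ[P₁](ι) + A₁(ι)⊤P₁(ι) + P₁(ι)A₁(ι) + C₁(ι)⊤P₁(ι)C₁(ι) < 0 and Λ[P₂](ι) + A₂(ι)⊤P₂(ι) + P₂(ι)A₂(ι) < 0. Then there exist positive definite maps Q₁, Q₂ : M → 𝕊ⁿ₊₊ and ε > 0 such that for all ι ∈ M: Λ[Q₁](ι) + A₁(ι)⊤Q₁(ι) + Q₁(ι)A₁(ι) + C₁(ι)⊤Q₁(ι)C₁(ι) ≤ −εQ₁(ι) and Λ[Q₂](ι) + A₂(ι)⊤Q₂(ι) + Q₂(ι)A₂(ι) + C₂(ι)⊤Q₁(ι)C₂(ι)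 ≤ −εQ₂(ι). -/
/-!
Strict definiteness survives small perturbations: positivity of `x ⬝ᵥ (S - ε • M) *ᵥ x` at
`ε = 0` on the compact unit sphere persists for small `ε`, and positive homogeneity carries it
to all `x ≠ 0`. The first inequality is invariant under `P₁ ↦ l • P₁`, so taking `Q₁ = l • P₁`
with `l > 0` small makes the cross term `l • C₂ᵀ P₁ C₂` a small perturbation of the second
inequality; one further small `ε`, uniform over the finitely many modes, gives the margin `ε • Q`.
-/

open Matrix Filter Topology

namespace Matrix

variable {ι : Type*} [Fintype ι]

theorem posDef_of_forall_mem_sphere {A : Matrix ι ι ℝ} (hA : A.IsHermitian)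
    (h : ∀ x ∈ Metric.sphere (0 : ι → ℝ) 1, 0 < x ⬝ᵥ A *ᵥ x) : A.PosDef := by
  refine .of_dotProduct_mulVec_pos hA fun x hx => ?_
  have hx' : 0 < ‖x‖ := norm_pos_iff.mpr hx
  have := h (‖x‖⁻¹ • x) (by simp [norm_smul, hx'.ne'])
  rw [mulVec_smul, dotProduct_smul, smul_dotProduct, smul_eq_mul, smul_eq_mul] at this
  simpa [hx'] using this

theorem PosDef.eventually_posDef_sub_smul {S M : Matrix ι ι ℝ} (hS : S.PosDef)
    (hM : M.IsHermitian) : ∀ᶠ ε in 𝓝 (0 : ℝ), (S - ε • M).PosDef := by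
  have hq : Continuous fun p : ℝ × (ι → ℝ) => p.2 ⬝ᵥ (S - p.1 • M) *ᵥ p.2 := by
    fun_prop
  have := (isCompact_sphere (0 : ι → ℝ) 1).eventually_forall_of_forall_eventually
    (x₀ := (0 : ℝ)) (P := fun ε x => 0 < x ⬝ᵥ (S - ε • M) *ᵥ x) fun x hx =>
      continuousAt_const.eventually_lt hq.continuousAt ?_
  · exact this.mono fun ε hε =>
      posDef_of_forall_mem_sphere (hS.1.sub (hM.smul (IsSelfAdjoint.all ε))) hε
  · simpa using hS.dotProduct_mulVec_pos (ne_zero_of_mem_unit_sphere ⟨x, hx⟩)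

end Matrix

theorem exists_pos_of_eventually_nhds_zero {p : ℝ → Prop} (h : ∀ᶠ ε in 𝓝 0, p ε) :
    ∃ ε > 0, p ε :=
  (((h.filter_mono nhdsWithin_le_nhds).and self_mem_nhdsWithin :
    ∀ᶠ ε in 𝓝[>] 0, p ε ∧ 0 < ε)).exists.imp fun _ h => ⟨h.2, h.1⟩

theorem stmt3_general {n m₀ : ℕ}
    (lam : Fin m₀ → Fin m₀ → ℝ)
    (P₁ P₂ A₁ A₂ C₁ C₂ : Fin m₀ → Matrix (Fin n) (Fin n) ℝ)
    (hP₁ : ∀ i, (P₁ i).PosDef) (hP₂ : ∀ i, (P₂ i).PosDef)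
    (h1 : ∀ i, ((-(∑ j, lam i j • P₁ j))
        - ((A₁ i)ᵀ * P₁ i + P₁ i * A₁ i + (C₁ i)ᵀ * P₁ i * C₁ i)).PosDef)
    (h2 : ∀ i, ((-(∑ j, lam i j • P₂ j))
        - ((A₂ i)ᵀ * P₂ i + P₂ i * A₂ i)).PosDef) :
    ∃ (Q₁ Q₂ : Fin m₀ → Matrix (Fin n) (Fin n) ℝ) (ε : ℝ), 0 < ε ∧
      (∀ i, (Q₁ i).IsSymm) ∧ (∀ i, (Q₂ i).IsSymm) ∧
      (∀ i, (Q₁ i).PosDef) ∧ (∀ i, (Q₂ i).PosDef) ∧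
      (∀ i, ((-(ε • Q₁ i)) - ((∑ j, lam i j • Q₁ j)
          + (A₁ i)ᵀ * Q₁ i + Q₁ i * A₁ i + (C₁ i)ᵀ * Q₁ i * C₁ i)).PosSemidef) ∧
      (∀ i, ((-(ε • Q₂ i)) - ((∑ j, lam i j • Q₂ j)
          + (A₂ i)ᵀ * Q₂ i + Q₂ i * A₂ i + (C₂ i)ᵀ * Q₁ i * C₂ i)).PosSemidef) := by
  have hC₂ : ∀ i, ((C₂ i)ᵀ * P₁ i * C₂ i).IsHermitian := fun i => by
    simpa using ((hP₁ i).posSemidef.conjTranspose_mul_mul_same (C₂ i)).isHermitian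
  obtain ⟨l, hl, hl₂⟩ := exists_pos_of_eventually_nhds_zero <| eventually_all.2 fun i =>
    (h2 i).eventually_posDef_sub_smul (hC₂ i)
  obtain ⟨ε, hε, hε₁₂⟩ := exists_pos_of_eventually_nhds_zero <| eventually_all.2 fun i =>
    ((h1 i).eventually_posDef_sub_smul (hP₁ i).1).and
      ((hl₂ i).eventually_posDef_sub_smul (hP₂ i).1)
  refine ⟨fun i => l • P₁ i, P₂, ε, hε, fun i => isHermitian_iff_isSymm.1 ((hP₁ i).smul hl).1,
    fun i => isHermitian_iff_isSymm.1 (hP₂ i).1, fun i => (hP₁ i).smul hl, hP₂,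
    fun i => ?_, fun i => ?_⟩
  · convert ((hε₁₂ i).1.smul hl).posSemidef using 1
    simp only [smul_sub, smul_neg, Finset.smul_sum, smul_add, smul_smul, mul_smul_comm,
      smul_mul_assoc, mul_comm l]
    abel
  · convert (hε₁₂ i).2.posSemidef using 1
    simp only [mul_smul_comm, smul_mul_assoc]
    abel

/-- Lyapunov-type inequalities: strict negative definiteness (5.2-form) implies the
ε-dissipative form (5.3-form) for possibly rescaled positive definite solutions. -/
theorem stmt3 {n m₀ : ℕ}
    (lam : Fin m₀ → Fin m₀ → ℝ)
    (hlam_pos : ∀ i j, i ≠ j → 0 < lam i j)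
    (hlam_sum : ∀ i, ∑ j, lam i j = 0)
    (P₁ P₂ A₁ A₂ C₁ C₂ : Fin m₀ → Matrix (Fin n) (Fin n) ℝ)
    (hP₁symm : ∀ i, (P₁ i).IsSymm) (hP₂symm : ∀ i, (P₂ i).IsSymm)
    (hP₁ : ∀ i, (P₁ i).PosDef) (hP₂ : ∀ i, (P₂ i).PosDef)
    (h1 : ∀ i, ((-(∑ j, lam i j • P₁ j))
        - ((A₁ i)ᵀ * P₁ i + P₁ i * A₁ i + (C₁ i)ᵀ * P₁ i * C₁ i)).PosDef)
    (h2 : ∀ i, ((-(∑ j, lam i j • P₂ j))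
        - ((A₂ i)ᵀ * P₂ i + P₂ i * A₂ i)).PosDef) :
    ∃ (Q₁ Q₂ : Fin m₀ → Matrix (Fin n) (Fin n) ℝ) (ε : ℝ), 0 < ε ∧
      (∀ i, (Q₁ i).IsSymm) ∧ (∀ i, (Q₂ i).IsSymm) ∧
      (∀ i, (Q₁ i).PosDef) ∧ (∀ i, (Q₂ i).PosDef) ∧
      (∀ i, ((-(ε • Q₁ i)) - ((∑ j, lam i j • Q₁ j)
          + (A₁ i)ᵀ * Q₁ i + Q₁ i * A₁ i + (C₁ i)ᵀ * Q₁ i * C₁ i)).PosSemidef) ∧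
      (∀ i, ((-(ε • Q₂ i)) - ((∑ j, lam i j • Q₂ j)
          + (A₂ i)ᵀ * Q₂ i + Q₂ i * A₂ i + (C₂ i)ᵀ * Q₁ i * C₂ i)).PosSemidef) :=
  stmt3_general lam P₁ P₂ A₁ A₂ C₁ C₂ hP₁ hP₂ h1 h2
end

section
/- Let (p_ι)_{ι≥1} and (λ_ι)_{ι≥1} be sequences of positive reals with Σ_ι p_ι = 1, λ_ι → 0, and Σ_ι p_ι/λ_ι < ∞. Define X(t, ι) = e^{−λ_ι t} x₀ for x₀ ∈ ℝ. Then ∫₀^∞ Σ_ι p_ι |X(t, ι)|² dt = (|x₀|²/2) Σ_ι p_ι/λ_ι < ∞, yet for every ε > 0 and every bounded sequence (P_ι) of positive reals bounded below away from 0, the inequality Σ_ι p_ι P_ι |X(t, ι)|² ≤ e^{−εt} Σ_ι p_ι P_ι |x₀|² fails for some t > 0. -/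
set_option maxHeartbeats 1000000

open MeasureTheory Real Set

lemma aux_int {b : ℝ} (hb : 0 < b) :
    ∫ t in Set.Ioi (0:ℝ), Real.exp (-(b * t)) = 1 / b := by
  have h := integral_comp_mul_left_Ioi (fun x => Real.exp (-x)) 0 hb
  simp only [mul_zero] at h
  rw [h, integral_exp_neg_Ioi, neg_zero, Real.exp_zero, smul_eq_mul, mul_one, one_div]

lemma aux_sq (a x₀ t : ℝ) : (Real.exp (-a * t) * x₀) ^ 2 = x₀ ^ 2 * Real.exp (-(2 * a * t)) := by
  rw [mul_pow, ← Real.exp_nat_mul]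
  ring_nf

/-- On an infinite state space, L²-integrability of all trajectories does not imply
uniform exponential (dissipative) decay: with X(t,ι) = e^{-λ_ι t} x₀, the total L² norm
integrates to (|x₀|²/2)·Σ p_ι/λ_ι < ∞, yet no uniform exponential bound with weights
(P_ι) bounded above and below can hold for all times. -/
theorem stmt6 (p lam : ℕ → ℝ) (hp : ∀ i, 0 < p i) (hlam : ∀ i, 0 < lam i)
    (hps : HasSum p 1)
    (hlam0 : Filter.Tendsto lam Filter.atTop (nhds 0))
    (hsum : Summable (fun i => p i / lam i))
    (x₀ : ℝ) (hx₀ : x₀ ≠ 0) :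
    ((∫ t in Set.Ioi (0 : ℝ), (∑' i, p i * (Real.exp (-lam i * t) * x₀) ^ 2))
        = x₀ ^ 2 / 2 * ∑' i, p i / lam i) ∧
    (∀ ε > (0 : ℝ), ∀ P : ℕ → ℝ,
      (∃ c > (0 : ℝ), ∀ i, c ≤ P i) → (∃ C : ℝ, ∀ i, P i ≤ C) →
      ∃ t > (0 : ℝ),
        ¬ ((∑' i, p i * P i * (Real.exp (-lam i * t) * x₀) ^ 2)
            ≤ Real.exp (-ε * t) * ∑' i, p i * P i * x₀ ^ 2)) := by
  have hx2 : (0:ℝ) < x₀ ^ 2 := by positivity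
  constructor
  · -- Part 1
    have hint : ∀ i, IntegrableOn (fun t => p i * (Real.exp (-lam i * t) * x₀) ^ 2)
        (Set.Ioi (0:ℝ)) := by
      intro i
      have h1 : IntegrableOn (fun t : ℝ => Real.exp (-(2 * lam i) * t)) (Set.Ioi 0) :=
        exp_neg_integrableOn_Ioi 0 (by linarith [hlam i])
      have h2 : IntegrableOn (fun t : ℝ => p i * x₀ ^ 2 * Real.exp (-(2 * lam i) * t))
          (Set.Ioi 0) := h1.const_mul (p i * x₀ ^ 2)
      refine IntegrableOn.congr_fun h2 (fun t _ => ?_) measurableSet_Ioi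
      rw [aux_sq]; ring_nf
    have hval : ∀ i, (∫ t in Set.Ioi (0:ℝ), p i * (Real.exp (-lam i * t) * x₀) ^ 2)
        = x₀ ^ 2 / 2 * (p i / lam i) := by
      intro i
      have h3 : (∫ t in Set.Ioi (0:ℝ), p i * (Real.exp (-lam i * t) * x₀) ^ 2)
          = ∫ t in Set.Ioi (0:ℝ), (p i * x₀ ^ 2) * Real.exp (-(2 * lam i * t)) := by
        refine setIntegral_congr_fun measurableSet_Ioi (fun t _ => ?_)
        rw [aux_sq]; ring
      rw [h3, integral_const_mul, aux_int (by linarith [hlam i] : (0:ℝ) < 2 * lam i)]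
      have hl := (hlam i).ne'
      field_simp
    have hsum2 : Summable (fun i => x₀ ^ 2 / 2 * (p i / lam i)) := hsum.mul_left _
    have hnorm : ∀ i, (∫ t in Set.Ioi (0:ℝ), ‖p i * (Real.exp (-lam i * t) * x₀) ^ 2‖)
        = x₀ ^ 2 / 2 * (p i / lam i) := by
      intro i
      rw [← hval i]
      refine setIntegral_congr_fun measurableSet_Ioi (fun t _ => ?_)
      rw [Real.norm_eq_abs, abs_of_nonneg (mul_nonneg (hp i).le (sq_nonneg _))]
    have key := MeasureTheory.integral_tsum_of_summable_integral_norm hint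
      (by simpa only [hnorm] using hsum2)
    rw [← key]
    rw [tsum_congr hval, tsum_mul_left]
  · -- Part 2
    intro ε hε P ⟨c, hc, hcP⟩ ⟨C, hC⟩
    have hP : ∀ i, 0 < P i := fun i => lt_of_lt_of_le hc (hcP i)
    obtain ⟨j, hj⟩ := (hlam0.eventually_lt_const (by linarith : (0:ℝ) < ε / 2)).exists
    have hδ : 0 < ε - 2 * lam j := by linarith
    set δ := ε - 2 * lam j with hδdef
    have hsummax : Summable (fun i => p i * (C * x₀ ^ 2)) := hps.summable.mul_right _
    have hle_max : ∀ i, p i * P i * x₀ ^ 2 ≤ p i * (C * x₀ ^ 2) := by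
      intro i
      have h1 : p i * P i ≤ p i * C := mul_le_mul_of_nonneg_left (hC i) (hp i).le
      calc p i * P i * x₀ ^ 2 ≤ p i * C * x₀ ^ 2 := mul_le_mul_of_nonneg_right h1 hx2.le
        _ = p i * (C * x₀ ^ 2) := by ring
    have hSsummable : Summable (fun i => p i * P i * x₀ ^ 2) :=
      Summable.of_nonneg_of_le
        (fun i => (mul_pos (mul_pos (hp i) (hP i)) hx2).le) hle_max hsummax
    set S := ∑' i, p i * P i * x₀ ^ 2 with hSdef
    have hA : 0 < p j * P j * x₀ ^ 2 := mul_pos (mul_pos (hp j) (hP j)) hx2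
    have hSpos : 0 < S := lt_of_lt_of_le hA (Summable.le_tsum hSsummable j
      (fun i _ => (mul_pos (mul_pos (hp i) (hP i)) hx2).le))
    set A := p j * P j * x₀ ^ 2 with hAdef
    set R := S / A with hRdef
    have hRpos : 0 < R := div_pos hSpos hA
    refine ⟨max 1 ((Real.log R + 1) / δ), lt_of_lt_of_le one_pos (le_max_left _ _), ?_⟩
    set t := max 1 ((Real.log R + 1) / δ) with htdef
    have ht1 : (Real.log R + 1) / δ ≤ t := le_max_right _ _
    have hδt : Real.log R + 1 ≤ δ * t := by
      rw [div_le_iff₀ hδ] at ht1; linarith [ht1]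
    have hexpδ : R < Real.exp (δ * t) := by
      calc R = Real.exp (Real.log R) := (Real.exp_log hRpos).symm
        _ < Real.exp (δ * t) := Real.exp_lt_exp.mpr (by linarith)
    have htpos : (0:ℝ) < t := lt_of_lt_of_le one_pos (le_max_left _ _)
    intro hle
    have hterm_le : p j * P j * (Real.exp (-lam j * t) * x₀) ^ 2
        ≤ ∑' i, p i * P i * (Real.exp (-lam i * t) * x₀) ^ 2 := by
      have hnn : ∀ i, 0 ≤ p i * P i * (Real.exp (-lam i * t) * x₀) ^ 2 := fun i =>
        mul_nonneg (mul_pos (hp i) (hP i)).le (sq_nonneg _)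
      refine Summable.le_tsum ?_ j (fun i _ => hnn i)
      refine Summable.of_nonneg_of_le hnn (fun i => ?_) hsummax
      have hexple : Real.exp (-lam i * t) ≤ 1 := by
        rw [← Real.exp_zero]
        exact Real.exp_le_exp.mpr (by nlinarith [hlam i, htpos])
      have h1 : (Real.exp (-lam i * t) * x₀) ^ 2 ≤ x₀ ^ 2 := by
        have he2 : Real.exp (-lam i * t) ^ 2 ≤ 1 := by
          nlinarith [Real.exp_pos (-lam i * t), hexple]
        rw [mul_pow]
        nlinarith [he2, hx2]
      calc p i * P i * (Real.exp (-lam i * t) * x₀) ^ 2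
          ≤ p i * P i * x₀ ^ 2 :=
            mul_le_mul_of_nonneg_left h1 (mul_pos (hp i) (hP i)).le
        _ ≤ p i * (C * x₀ ^ 2) := hle_max i
    have hjterm : p j * P j * (Real.exp (-lam j * t) * x₀) ^ 2
        = A * (Real.exp (δ * t) * Real.exp (-ε * t)) := by
      rw [aux_sq, ← Real.exp_add, hAdef, hδdef]
      ring_nf
    have hgt : Real.exp (-ε * t) * S < p j * P j * (Real.exp (-lam j * t) * x₀) ^ 2 := by
      rw [hjterm]
      have hAS : S < A * Real.exp (δ * t) := by
        have h := (div_lt_iff₀ hA).mp hexpδ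
        linarith [h]
      have hep : 0 < Real.exp (-ε * t) := Real.exp_pos _
      nlinarith [hAS, hep]
    linarith [hterm_le.trans hle, hgt]
end
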